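/- arXiv:0911.3532 — 3 statements merged into one kernel-verified Lean document; each statement's English description precedes it below -/
import Mathlib

section
/- Let L be a Lie algebra over a field K. Then L is perfect (i.e., [L, L] = L) if and only if every maximal proper Lie subalgebra of L is self-normalizing. -/
/-!
If a maximal subalgebra `A` is not self-normalizing, maximality forces its normalizer to be `L`, so
`A` is an ideal. For `z ∉ A` the space `A + K z` is then a subalgebra strictly containing `A`,
hence equal to `L`, and every bracket of `A + K z` lies in `A`: so `[L, L] ⊆ A ≠ L`. Conversely,
if `[L, L] ≠ L`, any hyperplane containing `[L, L]` is an ideal and a maximal subalgebra, and its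
normalizer is all of `L`.
-/

namespace LieIdeal

variable {R L : Type*} [CommRing R] [LieRing L] [LieAlgebra R L]

theorem lie_mem_of_mem_sup_span_singleton (I : LieIdeal R L) (z : L) {x y : L}
    (hx : x ∈ I.toSubmodule ⊔ R ∙ z) (hy : y ∈ I.toSubmodule ⊔ R ∙ z) : ⁅x, y⁆ ∈ I := by
  obtain ⟨a, ha, _, hs, rfl⟩ := Submodule.mem_sup.mp hx
  obtain ⟨b, hb, _, ht, rfl⟩ := Submodule.mem_sup.mp hy
  obtain ⟨s, rfl⟩ := Submodule.mem_span_singleton.mp hs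
  obtain ⟨t, rfl⟩ := Submodule.mem_span_singleton.mp ht
  have haz : ⁅a, z⁆ ∈ I := by rw [← lie_skew]; exact neg_mem (I.lie_mem ha)
  simp only [add_lie, lie_add, smul_lie, lie_smul, lie_self, smul_zero, add_zero]
  exact add_mem (add_mem (I.lie_mem hb) (I.smul_mem s (I.lie_mem hb))) (I.smul_mem t haz)

def supSpanSingleton (I : LieIdeal R L) (z : L) : LieSubalgebra R L where
  toSubmodule := I.toSubmodule ⊔ R ∙ z
  lie_mem' hx hy := le_sup_left (a := I.toSubmodule) (I.lie_mem_of_mem_sup_span_singleton z hx hy)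

theorem lie_top_top_le_of_isCoatom {I : LieIdeal R L} (hI : IsCoatom (I : LieSubalgebra R L)) :
    (⁅(⊤ : LieIdeal R L), ⊤⁆ : LieIdeal R L) ≤ I := by
  obtain ⟨z, -, hz⟩ := SetLike.exists_of_lt hI.lt_top
  have hlt : (I : LieSubalgebra R L) < I.supSpanSingleton z :=
    SetLike.lt_iff_le_and_exists.mpr ⟨fun _ => Submodule.mem_sup_left, z,
      Submodule.mem_sup_right (Submodule.mem_span_singleton_self z), hz⟩
  have htop : ∀ x : L, x ∈ I.toSubmodule ⊔ R ∙ z := fun x => by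
    change x ∈ I.supSpanSingleton z
    simp [hI.lt_iff.mp hlt]
  rw [LieSubmodule.lie_le_iff]
  exact fun x _ y _ => I.lie_mem_of_mem_sup_span_singleton z (htop x) (htop y)

def ofLieTopTopLE (p : Submodule R L)
    (h : (⁅(⊤ : LieIdeal R L), ⊤⁆ : LieIdeal R L).toSubmodule ≤ p) : LieIdeal R L where
  toSubmodule := p
  lie_mem _ := h (LieSubmodule.lie_mem_lie (LieSubmodule.mem_top _) (LieSubmodule.mem_top _))

end LieIdeal

namespace LieSubalgebra

variable {R L : Type*} [CommRing R] [LieRing L] [LieAlgebra R L]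

theorem isCoatom_of_isCoatom_toSubmodule {A : LieSubalgebra R L} (hA : IsCoatom A.toSubmodule) :
    IsCoatom A :=
  ⟨fun h => hA.ne_top (by rw [h, top_toSubmodule]),
    fun B hB => toSubmodule_injective (hA.lt_iff.mp hB)⟩

theorem normalizer_eq_self_of_isCoatom (hL : (⁅(⊤ : LieIdeal R L), ⊤⁆ : LieIdeal R L) = ⊤)
    {A : LieSubalgebra R L} (hA : IsCoatom A) : A.normalizer = A := by
  refine (hA.le_iff.mp A.le_normalizer).resolve_left fun hN => hA.ne_top ?_
  obtain ⟨I, rfl⟩ : ∃ I : LieIdeal R L, ↑I = A := by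
    rw [exists_lieIdeal_coe_eq_iff]
    exact fun x y hy => (mem_normalizer_iff A x).mp (hN ▸ mem_top x) y hy
  have hI : I = ⊤ := top_le_iff.mp (hL ▸ LieIdeal.lie_top_top_le_of_isCoatom hA)
  rw [hI, LieIdeal.top_toLieSubalgebra]

end LieSubalgebra

theorem LieAlgebra.exists_isCoatom_lieIdeal_of_lie_top_top_ne_top {K L : Type*} [Field K]
    [LieRing L] [LieAlgebra K L] (hL : (⁅(⊤ : LieIdeal K L), ⊤⁆ : LieIdeal K L) ≠ ⊤) :
    ∃ I : LieIdeal K L, IsCoatom (I : LieSubalgebra K L) := by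
  obtain ⟨H, hH, hle⟩ := (eq_top_or_exists_le_coatom
    (⁅(⊤ : LieIdeal K L), ⊤⁆ : LieIdeal K L).toSubmodule).resolve_left (by simpa using hL)
  exact ⟨LieIdeal.ofLieTopTopLE H hle, LieSubalgebra.isCoatom_of_isCoatom_toSubmodule hH⟩

/-- A Lie algebra `L` over a field is perfect (`[L,L] = L`) iff every maximal proper Lie
subalgebra of `L` is self-normalizing. -/
theorem stmt_2 (K : Type*) [Field K] (L : Type*) [LieRing L] [LieAlgebra K L] :
    (⁅(⊤ : LieIdeal K L), (⊤ : LieIdeal K L)⁆ : LieIdeal K L) = ⊤ ↔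
      ∀ A : LieSubalgebra K L, A ≠ ⊤ →
        (∀ B : LieSubalgebra K L, A ≤ B → B = A ∨ B = ⊤) → A.normalizer = A := by
  constructor
  · intro hL A hA hmax
    have hA' : IsCoatom A := ⟨hA, fun B hB => (hmax B hB.le).resolve_left hB.ne'⟩
    exact A.normalizer_eq_self_of_isCoatom hL hA'
  · intro hmax
    by_contra hL
    obtain ⟨I, hI⟩ := LieAlgebra.exists_isCoatom_lieIdeal_of_lie_top_top_ne_top hL
    have hN := hmax I hI.ne_top fun B hB => (hI.le_iff.mp hB).symm
    rw [LieIdeal.normalizer_eq_top] at hN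
    exact hI.ne_top hN.symm
end

section
/- In the Lie algebra Vec₁ of formal vector fields on the line vanishing at 0, spanned by {xᵏ∂ : k ≥ 1} with bracket [xᵃ∂, xᵇ∂] = (b−a)x^{a+b−1}∂, the only ideals are Span{x²∂} ⊕ Span{xᵏ∂ : k ≥ 4} and the subspaces Span{xᵏ∂ : k ≥ N} for N ≥ 1 (together with 0). -/
/-!
Bracketing with `e 0 = x∂` multiplies `e n` by `n`, so `ad (e 0)` is diagonal with pairwise
distinct eigenvalues and every ideal is spanned by the basis vectors it contains. The set `S` of
their indices satisfies `n ∈ S, m ≠ n → m + n ∈ S`, which forces `S` to be empty, an interval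
`[N, ∞)`, or `{1} ∪ [3, ∞)`: from its least element `N` every `k > N` other than `2N` is reached in
one step, `2N = (N - 1) + (N + 1)` in two when `N ≥ 2`, and only `2 = 1 + 1` can be missed.
-/

open Module

/-- Closure property of the set of basis indices of an ideal. -/
def AddNeClosed (S : Set ℕ) : Prop :=
  ∀ ⦃m n : ℕ⦄, n ∈ S → m ≠ n → m + n ∈ S

namespace AddNeClosed

variable {S : Set ℕ} {N : ℕ}

theorem mem_of_lt (hS : AddNeClosed S) (hN : N ∈ S) {k : ℕ} (hk : N < k) (hk2 : k ≠ 2 * N) :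
    k ∈ S := by
  simpa [Nat.sub_add_cancel hk.le] using hS (m := k - N) hN (by omega)

theorem two_mul_mem (hS : AddNeClosed S) (hN : N ∈ S) (h2 : 2 ≤ N) : 2 * N ∈ S := by
  have hsucc : 1 + N ∈ S := hS hN (by omega)
  simpa [show N - 1 + (1 + N) = 2 * N by omega] using hS (m := N - 1) hsucc (by omega)

theorem Ici_subset (hS : AddNeClosed S) (hN : N ∈ S) (h1 : N = 1 → 2 ∈ S) :
    Set.Ici N ⊆ S := by
  intro k (hk : N ≤ k)
  obtain rfl | hlt := hk.eq_or_lt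
  · exact hN
  by_cases hk2 : k = 2 * N
  · obtain rfl | h2 : N = 1 ∨ 2 ≤ N := by omega
    · simpa [hk2] using h1 rfl
    · exact hk2 ▸ hS.two_mul_mem hN h2
  · exact hS.mem_of_lt hN hlt hk2

theorem eq_empty_or_eq_or_eq_Ici (hS : AddNeClosed S) :
    S = ∅ ∨ S = insert 1 (Set.Ici 3) ∨ ∃ N, S = Set.Ici N := by
  classical
  rcases S.eq_empty_or_nonempty with hempty | hne
  · exact Or.inl hempty
  have hmin : S ⊆ Set.Ici (Nat.find hne) := fun k hk => Nat.find_min' hne hk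
  have hN : Nat.find hne ∈ S := Nat.find_spec hne
  by_cases hgap : Nat.find hne = 1 ∧ 2 ∉ S
  · refine Or.inr (Or.inl (Set.Subset.antisymm (fun k hk => ?_) ?_))
    · have : 1 ≤ k := hgap.1 ▸ hmin hk
      obtain rfl | rfl | h3 : k = 1 ∨ k = 2 ∨ 3 ≤ k := by omega
      exacts [Set.mem_insert _ _, absurd hk hgap.2, Or.inr h3]
    · rw [hgap.1] at hN
      exact Set.insert_subset hN fun k (hk : 3 ≤ k) => hS.mem_of_lt hN (by omega) (by omega)
  · exact Or.inr (Or.inr ⟨_, hmin.antisymm (hS.Ici_subset hN fun h1 => by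
      by_contra h2; exact hgap ⟨h1, h2⟩)⟩)

end AddNeClosed

section Diagonal

variable {ι K V : Type*} [Field K] [AddCommGroup V] [Module K V] (b : Basis ι K V)
  {f : Module.End K V} {c : ι → K}

theorem Module.Basis.repr_apply_of_apply_eq_smul (hf : ∀ i, f (b i) = c i • b i) (x : V)
    (i : ι) : b.repr (f x) i = c i * b.repr x i := by
  classical
  have hcoord : (Finsupp.lapply i ∘ₗ b.repr.toLinearMap) ∘ₗ f
      = c i • (Finsupp.lapply i ∘ₗ b.repr.toLinearMap) := by
    refine b.ext fun j => ?_
    obtain rfl | hji := eq_or_ne j i <;> simp [*]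
  simpa using LinearMap.congr_fun hcoord x

variable {b}

/-- Distinct eigenvalues are separated by `f - c j`, which kills the `j`-th coordinate and
rescales the others by nonzero factors. -/
theorem Submodule.basis_mem_of_repr_ne_zero (hc : Function.Injective c)
    (hf : ∀ i, f (b i) = c i • b i) {p : Submodule K V} (hp : ∀ x ∈ p, f x ∈ p) {x : V}
    (hx : x ∈ p) {i : ι} (hi : b.repr x i ≠ 0) : b i ∈ p := by
  classical
  induction hcard : (b.repr x).support.card using Nat.strong_induction_on generalizing x with
  | _ n ih =>
  by_cases hsingle : (b.repr x).support ⊆ {i}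
  · have hxi : x = b.repr x i • b i := by
      rw [← b.repr_symm_single, ← Finsupp.support_subset_singleton.mp hsingle,
        b.repr.symm_apply_apply]
    exact (p.smul_mem_iff hi).mp (hxi ▸ hx)
  obtain ⟨j, hj, hji⟩ := Finset.not_subset.mp hsingle
  rw [Finset.mem_singleton] at hji
  have hrepr : ∀ k, b.repr (f x - c j • x) k = (c k - c j) * b.repr x k := fun k => by
    simp [b.repr_apply_of_apply_eq_smul hf, sub_mul]
  have hsupp : (b.repr (f x - c j • x)).support ⊆ (b.repr x).support.erase j := fun k hk => by
    rw [Finsupp.mem_support_iff, hrepr] at hk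
    exact Finset.mem_erase.mpr ⟨by rintro rfl; simp at hk, Finsupp.mem_support_iff.mpr
      (right_ne_zero_of_mul hk)⟩
  refine ih _ ?_ (p.sub_mem (hp x hx) (p.smul_mem (c j) hx)) ?_ rfl
  · exact hcard ▸ (Finset.card_le_card hsupp).trans_lt (Finset.card_erase_lt_of_mem hj)
  · rw [hrepr]
    exact mul_ne_zero (sub_ne_zero.mpr (hc.ne (Ne.symm hji))) hi

theorem Submodule.eq_span_basis_of_apply_mem (hc : Function.Injective c)
    (hf : ∀ i, f (b i) = c i • b i) {p : Submodule K V} (hp : ∀ x ∈ p, f x ∈ p) :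
    p = Submodule.span K (b '' {i | b i ∈ p}) := by
  refine le_antisymm (fun x hx => Submodule.span_mono ?_ (b.mem_span_repr_support x)) ?_
  · exact Set.image_mono fun i hi =>
      Submodule.basis_mem_of_repr_ne_zero hc hf hp hx (Finsupp.mem_support_iff.mp hi)
  · exact Submodule.span_le.mpr (Set.image_subset_iff.mpr fun _ hi => hi)

end Diagonal

section Witt

variable {K L : Type*} [Field K] [CharZero K] [LieRing L] [LieAlgebra K L] {e : Basis ℕ K L}

theorem LieIdeal.eq_span_basis_of_lie_eq
    (he : ∀ m n : ℕ, ⁅e m, e n⁆ = ((n : K) - m) • e (m + n)) (I : LieIdeal K L) :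
    I.toSubmodule = Submodule.span K (e '' {n | e n ∈ I}) :=
  Submodule.eq_span_basis_of_apply_mem (c := fun n : ℕ => (n : K)) Nat.cast_injective
    (f := LieAlgebra.ad K L (e 0)) (fun n => by simp [he]) fun _ hx => I.lie_mem hx

theorem LieIdeal.addNeClosed_of_lie_eq
    (he : ∀ m n : ℕ, ⁅e m, e n⁆ = ((n : K) - m) • e (m + n)) (I : LieIdeal K L) :
    AddNeClosed {n | e n ∈ I} := fun m n hn hmn => by
  have hne : (n : K) - m ≠ 0 := sub_ne_zero.mpr (Nat.cast_injective.ne hmn.symm)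
  show e (m + n) ∈ I
  rw [← LieSubmodule.mem_toSubmodule, ← Submodule.smul_mem_iff _ hne, ← he]
  exact I.lie_mem hn

end Witt

theorem Set.setOf_exists_and_eq_apply {α β : Type*} (f : α → β) (P : α → Prop) :
    {x | ∃ a, P a ∧ x = f a} = f '' {a | P a} := by
  ext x
  simp [eq_comm]

/-- `e n` stands for `x^(n+1)∂`, so `N` is one less than the exponent in `Span{xᵏ∂ : k ≥ N}`. -/
theorem stmt_4 (L : Type*) [LieRing L] [LieAlgebra ℝ L] (e : Module.Basis ℕ ℝ L)
    (he : ∀ m n : ℕ, ⁅e m, e n⁆ = ((n : ℝ) - (m : ℝ)) • e (m + n))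
    (I : LieIdeal ℝ L) :
    I.toSubmodule = ⊥ ∨
    I.toSubmodule = Submodule.span ℝ ({e 1} ∪ {x : L | ∃ n : ℕ, 3 ≤ n ∧ x = e n}) ∨
    ∃ N : ℕ, I.toSubmodule = Submodule.span ℝ {x : L | ∃ n : ℕ, N ≤ n ∧ x = e n} := by
  simp only [Set.setOf_exists_and_eq_apply, Set.singleton_union, ← Set.image_insert_eq]
  rw [LieIdeal.eq_span_basis_of_lie_eq he I]
  rcases (LieIdeal.addNeClosed_of_lie_eq he I).eq_empty_or_eq_or_eq_Ici with h | h | ⟨N, h⟩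
  · simp [h]
  · exact Or.inr (Or.inl (by rw [h]; rfl))
  · exact Or.inr (Or.inr ⟨N, by rw [h]; rfl⟩)
end

section
/- Let g be a finite-dimensional real Lie algebra that does not contain two nonzero elements X, Y with [X, Y] = Y. Then any Lie algebra homomorphism f : Vec₁ → g vanishes on the ideal Span{xᵏ∂ : k ≥ 2} of divergence-zero-at-0 elements; equivalently, the image of f is at most one-dimensional. -/
/-! `ad (x∂)` acts on `xⁿ⁺¹∂` with the nonzero eigenvalue `n`, so for `n ≥ 1` the image
`f (xⁿ⁺¹∂)` is an eigenvector of `ad (f (x∂))` with a nonzero eigenvalue unless it vanishes.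
Rescaling `f (x∂)` by `1/n` would then give a forbidden pair `⁅X, Y⁆ = Y`. -/

theorem LieAlgebra.eq_zero_of_lie_eq_smul {K g : Type*} [Field K] [LieRing g] [LieAlgebra K g]
    (hg : ¬ ∃ X Y : g, X ≠ 0 ∧ Y ≠ 0 ∧ ⁅X, Y⁆ = Y) {x y : g} {c : K} (hc : c ≠ 0)
    (h : ⁅x, y⁆ = c • y) : y = 0 := by
  by_contra hy
  by_cases hx : x = 0
  · rw [hx, zero_lie] at h
    exact hy ((smul_eq_zero.mp h.symm).resolve_left hc)
  · refine hg ⟨c⁻¹ • x, y, smul_ne_zero (inv_ne_zero hc) hx, hy, ?_⟩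
    rw [smul_lie, h, smul_smul, inv_mul_cancel₀ hc, one_smul]

/-- `e n` stands for `xⁿ⁺¹∂`, so `Span{xᵏ∂ : k ≥ 2}` is the span of the `e n` with `n ≥ 1`. -/
theorem stmt_9_general (L : Type*) [LieRing L] [LieAlgebra ℝ L]
    (g : Type*) [LieRing g] [LieAlgebra ℝ g]
    (hg : ¬ ∃ X Y : g, X ≠ 0 ∧ Y ≠ 0 ∧ ⁅X, Y⁆ = Y)
    (e : Module.Basis ℕ ℝ L)
    (he : ∀ m n : ℕ, ⁅e m, e n⁆ = ((n : ℝ) - (m : ℝ)) • e (m + n))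
    (f : L →ₗ⁅ℝ⁆ g) :
    ∀ v ∈ Submodule.span ℝ {x : L | ∃ n : ℕ, 1 ≤ n ∧ x = e n}, f v = 0 := by
  have image_eq_zero (n : ℕ) (hn : 1 ≤ n) : f (e n) = 0 := by
    refine LieAlgebra.eq_zero_of_lie_eq_smul hg (x := f (e 0)) (c := (n : ℝ)) (by positivity) ?_
    rw [← f.map_lie, he 0 n, map_smul, zero_add, Nat.cast_zero, sub_zero]
  have span_le_ker : Submodule.span ℝ {x : L | ∃ n : ℕ, 1 ≤ n ∧ x = e n} ≤ f.toLinearMap.ker :=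
    Submodule.span_le.mpr (by rintro _ ⟨n, hn, rfl⟩; exact image_eq_zero n hn)
  exact fun v hv => span_le_ker hv

/-- If the finite-dimensional real Lie algebra `g` contains no two nonzero elements `X, Y`
with `⁅X, Y⁆ = Y`, then any Lie algebra homomorphism `f : Vec₁ → g` vanishes on the ideal
`Span{xᵏ∂ : k ≥ 2}`.  `Vec₁` is presented by a basis `e : ℕ → L` with `e n = x^(n+1)∂` and
bracket `⁅e m, e n⁆ = (n - m) • e (m + n)`; the ideal in question is `Span{e n : n ≥ 1}`. -/
theorem stmt_9 (L : Type*) [LieRing L] [LieAlgebra ℝ L]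
    (g : Type*) [LieRing g] [LieAlgebra ℝ g] [FiniteDimensional ℝ g]
    (hg : ¬ ∃ X Y : g, X ≠ 0 ∧ Y ≠ 0 ∧ ⁅X, Y⁆ = Y)
    (e : Module.Basis ℕ ℝ L)
    (he : ∀ m n : ℕ, ⁅e m, e n⁆ = ((n : ℝ) - (m : ℝ)) • e (m + n))
    (f : L →ₗ⁅ℝ⁆ g) :
    ∀ v ∈ Submodule.span ℝ {x : L | ∃ n : ℕ, 1 ≤ n ∧ x = e n}, f v = 0 :=
  stmt_9_general L g hg e he f
end
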